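/- With μ, h, k, s(r,t) as above, if r ≥ λ₂(μ) where λ₂(μ)² = ∫ u² dμ(u) < ∞, then lim_{t→0⁺} s(r,t)·t = r² − λ₂(μ)². -/

import Mathlib

/-!
Write `φ(s) = 1/h(s) − s`, so that `k(s,t) = r²` reads `(s − t)(φ(s) + t) = r²`, i.e.
`s·t = r² − s·φ(s) + t·φ(s) + t²`. Jensen's inequality for the convex map `x ↦ s/(s² + x)` gives
`s·φ(s) ≤ λ₂²`, while `s·φ(s) ≥ s²(1 − s·h(s)) = ∫ s²u²/(s² + u²) dμ → λ₂²` by dominated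
convergence. Along a solution `s(r,t)` this forces `s·φ(s) → λ₂²` as `t → 0⁺`: either `s(r,t)` is
large, or it is bounded, `s·t` is small and the equation together with `r² ≥ λ₂²` pushes `s·φ(s)`
above any `a < λ₂²`. Finally `φ(s) ≤ s` and `s·φ(s) ≤ λ₂²` give `φ(s) ≤ λ₂`, so `t·φ(s) → 0`.
-/

open MeasureTheory Set Filter

/-- `h μ s = ∫ s/(s² + u²) dμ(u)`. -/
noncomputable def hfun (μ : MeasureTheory.Measure ℝ) (s : ℝ) : ℝ :=
  ∫ u, s / (s ^ 2 + u ^ 2) ∂μ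

/-- `k(s,t) = (s−t)(1/h(s) − s + t)`. -/
noncomputable def kfun (μ : MeasureTheory.Measure ℝ) (s t : ℝ) : ℝ :=
  (s - t) * (1 / hfun μ s - s + t)

open Topology

section Hfun

variable {μ : Measure ℝ} {s : ℝ}

theorem integrable_div_sq_add_sq [IsFiniteMeasure μ] (hs : 0 < s) :
    Integrable (fun u : ℝ => s / (s ^ 2 + u ^ 2)) μ := by
  refine (integrable_const s⁻¹).mono'
    (continuous_const.div (by fun_prop) fun u => by positivity).aestronglyMeasurable
    (ae_of_all _ fun u => ?_)
  rw [Real.norm_of_nonneg (by positivity), div_le_iff₀ (by positivity)]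
  field_simp
  nlinarith [sq_nonneg u]

variable [IsProbabilityMeasure μ]

theorem hfun_le_inv (hs : 0 < s) : hfun μ s ≤ s⁻¹ := by
  have := integral_mono (integrable_div_sq_add_sq hs) (integrable_const (μ := μ) s⁻¹) fun u => by
    rw [div_le_iff₀ (by positivity)]
    field_simp
    nlinarith [sq_nonneg u]
  simpa [hfun] using this

theorem sq_mul_one_sub_mul_hfun (hs : 0 < s) :
    s ^ 2 * (1 - s * hfun μ s) = ∫ u, s ^ 2 * u ^ 2 / (s ^ 2 + u ^ 2) ∂μ := by
  have hpt : ∀ u : ℝ, s ^ 2 * u ^ 2 / (s ^ 2 + u ^ 2) = s ^ 2 - s ^ 3 * (s / (s ^ 2 + u ^ 2)) := by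
    intro u
    field_simp
    ring
  simp_rw [hpt]
  rw [integral_sub (integrable_const _) ((integrable_div_sq_add_sq hs).const_mul _),
    integral_const_mul, hfun]
  simp only [integral_const, probReal_univ, smul_eq_mul, one_mul]
  ring

theorem div_sq_add_integral_sq_le_hfun (hs : 0 < s) (hint : Integrable (fun u : ℝ => u ^ 2) μ) :
    s / (s ^ 2 + ∫ u, u ^ 2 ∂μ) ≤ hfun μ s := by
  have hconv : ConvexOn ℝ (Ici 0) fun x : ℝ => s / (s ^ 2 + x) := by
    refine ((((convexOn_zpow (-1)).translate_right (s ^ 2)).smul hs.le).subset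
      (fun x (hx : 0 ≤ x) => by simp only [mem_preimage, mem_Ioi]; positivity)
      (convex_Ici 0)).congr fun x _ => ?_
    simp [div_eq_mul_inv]
  have hcont : ContinuousOn (fun x : ℝ => s / (s ^ 2 + x)) (Ici 0) :=
    continuousOn_const.div (by fun_prop) fun x (hx : 0 ≤ x) => by positivity
  exact hconv.map_integral_le hcont isClosed_Ici (ae_of_all _ fun u => sq_nonneg u) hint
    (integrable_div_sq_add_sq hs)

variable (hint : Integrable (fun u : ℝ => u ^ 2) μ)
include hint

theorem hfun_pos (hs : 0 < s) : 0 < hfun μ s := by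
  have : 0 ≤ ∫ u, u ^ 2 ∂μ := integral_nonneg fun u => sq_nonneg u
  exact (by positivity : 0 < s / (s ^ 2 + ∫ u, u ^ 2 ∂μ)).trans_le
    (div_sq_add_integral_sq_le_hfun hs hint)

theorem le_one_div_hfun (hs : 0 < s) : s ≤ 1 / hfun μ s := by
  rw [le_one_div hs (hfun_pos hint hs), one_div]
  exact hfun_le_inv hs

theorem mul_one_div_hfun_sub_le (hs : 0 < s) : s * (1 / hfun μ s - s) ≤ ∫ u, u ^ 2 ∂μ := by
  have : 0 ≤ ∫ u, u ^ 2 ∂μ := integral_nonneg fun u => sq_nonneg u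
  have hinv : 1 / hfun μ s ≤ (s ^ 2 + ∫ u, u ^ 2 ∂μ) / s := by
    simpa only [one_div_div] using
      one_div_le_one_div_of_le (by positivity) (div_sq_add_integral_sq_le_hfun hs hint)
  calc s * (1 / hfun μ s - s) ≤ s * ((s ^ 2 + ∫ u, u ^ 2 ∂μ) / s - s) := by gcongr
    _ = ∫ u, u ^ 2 ∂μ := by field_simp; ring

theorem integral_sq_mul_sq_div_le (hs : 0 < s) :
    ∫ u, s ^ 2 * u ^ 2 / (s ^ 2 + u ^ 2) ∂μ ≤ s * (1 / hfun μ s - s) := by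
  have hh := hfun_pos hint hs
  rw [← sq_mul_one_sub_mul_hfun hs, ← sub_nonneg]
  have : s * (1 / hfun μ s - s) - s ^ 2 * (1 - s * hfun μ s)
      = s / hfun μ s * (1 - s * hfun μ s) ^ 2 := by
    field_simp
  rw [this]
  positivity

omit [IsProbabilityMeasure μ] in
theorem tendsto_integral_sq_mul_sq_div :
    Tendsto (fun s : ℝ => ∫ u, s ^ 2 * u ^ 2 / (s ^ 2 + u ^ 2) ∂μ) atTop (𝓝 (∫ u, u ^ 2 ∂μ)) := by
  refine tendsto_integral_filter_of_dominated_convergence _ ?_ ?_ hint (ae_of_all _ fun u => ?_)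
  · filter_upwards [eventually_gt_atTop 0] with s hs
    exact (Continuous.div (by fun_prop) (by fun_prop) fun u => by positivity).aestronglyMeasurable
  · filter_upwards [eventually_gt_atTop 0] with s hs
    refine ae_of_all _ fun u => ?_
    rw [Real.norm_of_nonneg (by positivity), div_le_iff₀ (by positivity)]
    nlinarith [sq_nonneg u, sq_nonneg s, mul_nonneg (sq_nonneg u) (sq_nonneg u)]
  · have : Tendsto (fun s : ℝ => u ^ 2 - u ^ 4 / (s ^ 2 + u ^ 2)) atTop (𝓝 (u ^ 2 - 0)) :=
      tendsto_const_nhds.sub (tendsto_const_nhds.div_atTop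
        ((tendsto_pow_atTop two_ne_zero).atTop_add tendsto_const_nhds))
    rw [sub_zero] at this
    refine this.congr' ?_
    filter_upwards [eventually_gt_atTop 0] with s hs
    field_simp
    ring

theorem tendsto_mul_one_div_hfun_sub :
    Tendsto (fun s => s * (1 / hfun μ s - s)) atTop (𝓝 (∫ u, u ^ 2 ∂μ)) := by
  refine tendsto_of_tendsto_of_tendsto_of_le_of_le' (tendsto_integral_sq_mul_sq_div hint)
    tendsto_const_nhds ?_ ?_ <;> filter_upwards [eventually_gt_atTop 0] with s hs
  · exact integral_sq_mul_sq_div_le hint hs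
  · exact mul_one_div_hfun_sub_le hint hs

end Hfun

section SolutionAsymptotics

variable {φ σ : ℝ → ℝ} {L r : ℝ}

theorem tendsto_mul_comp_solution (hφL : ∀ s > 0, s * φ s ≤ L)
    (hφlim : Tendsto (fun s => s * φ s) atTop (𝓝 L)) (hLr : L ≤ r ^ 2)
    (hφ0 : ∀ s > 0, 0 ≤ φ s)
    (hσ : ∀ t > 0, t < σ t ∧ (σ t - t) * (φ (σ t) + t) = r ^ 2) :
    Tendsto (fun t => σ t * φ (σ t)) (𝓝[>] 0) (𝓝 L) := by
  refine tendsto_order.2 ⟨fun a ha => ?_, fun b hb => ?_⟩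
  · obtain ⟨M, hM⟩ := eventually_atTop.1 (hφlim.eventually (eventually_gt_nhds ha))
    set M' := max M 1
    have hM' : 0 < M' := one_pos.trans_le (le_max_right _ _)
    filter_upwards [Ioo_mem_nhdsGT (div_pos (sub_pos.2 ha) hM')] with t ⟨ht, htδ⟩
    obtain ⟨htσ, hk⟩ := hσ t ht
    rcases le_or_gt M' (σ t) with hlarge | hsmall
    · exact hM _ ((le_max_left _ _).trans hlarge)
    · have hMt : M' * t < L - a := (lt_div_iff₀' hM').1 htδ
      have hφ := hφ0 _ (ht.trans htσ)
      nlinarith [mul_le_mul_of_nonneg_right hsmall.le ht.le, mul_nonneg ht.le hφ]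
  · filter_upwards [self_mem_nhdsWithin] with t ht
    exact (hφL _ (ht.out.trans (hσ t ht).1)).trans_lt hb

theorem tendsto_mul_solution (hφL : ∀ s > 0, s * φ s ≤ L)
    (hφlim : Tendsto (fun s => s * φ s) atTop (𝓝 L)) (hLr : L ≤ r ^ 2)
    (hφ0 : ∀ s > 0, 0 ≤ φ s)
    (hσ : ∀ t > 0, t < σ t ∧ (σ t - t) * (φ (σ t) + t) = r ^ 2) :
    Tendsto (fun t => σ t * t) (𝓝[>] 0) (𝓝 (r ^ 2 - L)) := by
  have ht : Tendsto (fun t : ℝ => t) (𝓝[>] 0) (𝓝 0) :=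
    tendsto_nhdsWithin_of_tendsto_nhds tendsto_id
  have hφ_le : ∀ t > 0, φ (σ t) ≤ √L := by
    intro t ht
    obtain ⟨htσ, hk⟩ := hσ t ht
    have hσ0 := ht.trans htσ
    have hφ := hφ0 _ hσ0
    have hGL := hφL _ hσ0
    -- `t·φ = σ·t − r² + σ·φ − t²` by `hσ`, and `σ·φ ≤ L ≤ r²`
    have hφσ : φ (σ t) ≤ σ t := le_of_mul_le_mul_left (by nlinarith) ht
    have hL : 0 ≤ L := (mul_nonneg hσ0.le hφ).trans hGL
    exact (Real.le_sqrt hφ hL).2 (by nlinarith [mul_le_mul_of_nonneg_left hφσ hφ])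
  have htφ : Tendsto (fun t => t * φ (σ t)) (𝓝[>] 0) (𝓝 0) := by
    refine tendsto_of_tendsto_of_tendsto_of_le_of_le' tendsto_const_nhds
      (by simpa using ht.mul_const √L) ?_ ?_ <;>
      filter_upwards [self_mem_nhdsWithin] with t ht
    · exact mul_nonneg ht.out.le (hφ0 _ (ht.out.trans (hσ t ht).1))
    · exact mul_le_mul_of_nonneg_left (hφ_le t ht) ht.out.le
  have hlim := ((tendsto_const_nhds (x := r ^ 2)).sub
    (tendsto_mul_comp_solution hφL hφlim hLr hφ0 hσ)).add (htφ.add (ht.pow 2))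
  rw [zero_pow two_ne_zero, add_zero, add_zero] at hlim
  refine hlim.congr' ?_
  filter_upwards [self_mem_nhdsWithin] with t ht
  linear_combination -(hσ t ht).2

end SolutionAsymptotics

theorem stmt7_general (μ : MeasureTheory.Measure ℝ) [IsProbabilityMeasure μ]
    (hint : Integrable (fun u : ℝ => u ^ 2) μ)
    (r : ℝ) (hrge : (∫ u, u ^ 2 ∂μ) ≤ r ^ 2)
    (s : ℝ → ℝ)
    (hs : ∀ t : ℝ, 0 < t → s t ∈ Ioi t ∧ kfun μ (s t) t = r ^ 2) :
    Tendsto (fun t => s t * t) (nhdsWithin 0 (Ioi 0))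
      (nhds (r ^ 2 - ∫ u, u ^ 2 ∂μ)) := by
  refine tendsto_mul_solution (φ := fun s => 1 / hfun μ s - s)
    (fun _ hσ => mul_one_div_hfun_sub_le hint hσ) (tendsto_mul_one_div_hfun_sub hint) hrge
    (fun _ hσ => sub_nonneg.2 (le_one_div_hfun hint hσ)) hs

/-- Let `s(r,t)` be the solution in `(t,∞)` of `k(s,t) = r²`. If `r ≥ λ₂(μ)` where
`λ₂(μ)² = ∫ u² dμ < ∞`, then `s(r,t)·t → r² − λ₂(μ)²` as `t → 0⁺`. -/
theorem stmt7 (μ : MeasureTheory.Measure ℝ) [IsProbabilityMeasure μ]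
    (hsym : μ.map (fun u => -u) = μ)
    (hnd : ∀ c : ℝ, μ ≠ MeasureTheory.Measure.dirac c)
    (hint : Integrable (fun u : ℝ => u ^ 2) μ)
    (r : ℝ) (hr : 0 < r) (hrge : (∫ u, u ^ 2 ∂μ) ≤ r ^ 2)
    (s : ℝ → ℝ)
    (hs : ∀ t : ℝ, 0 < t → s t ∈ Ioi t ∧ kfun μ (s t) t = r ^ 2) :
    Tendsto (fun t => s t * t) (nhdsWithin 0 (Ioi 0))
      (nhds (r ^ 2 - ∫ u, u ^ 2 ∂μ)) :=
  stmt7_general μ hint r hrge s hs
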